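/- arXiv:2503.01790 — 7 statements merged into one kernel-verified Lean document; each statement's English description precedes it below -/
import Mathlib

section
/- Let G be a group with core operation x * y = x y⁻¹ x, and let H = { z ∈ Z(G) : z² = 1 }, where Z(G) is the center. Then for x, y ∈ G, the left translations L_x and L_y coincide (i.e., x a⁻¹ x = y a⁻¹ y for all a ∈ G) if and only if x⁻¹ y ∈ H. -/
theorem core_left_translations_eq_iff (G : Type*) [Group G] (x y : G) :
    (∀ a : G, x * a⁻¹ * x = y * a⁻¹ * y) ↔
      (x⁻¹ * y ∈ Subgroup.center G ∧ (x⁻¹ * y) ^ 2 = 1) := by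
  set z := x⁻¹ * y with hzdef
  have hy : y = x * z := by rw [hzdef]; group
  constructor
  · intro h
    have hsq : z ^ 2 = 1 := by
      have hx := h x
      rw [mul_inv_cancel, one_mul] at hx
      rw [sq, hzdef]
      calc x⁻¹ * y * (x⁻¹ * y) = x⁻¹ * (y * x⁻¹ * y) := by group
        _ = x⁻¹ * x := by rw [← hx]
        _ = 1 := inv_mul_cancel x
    have hzz : z * z = 1 := by rw [← sq]; exact hsq
    have key : ∀ u : G, u = z * u * z := by
      intro u
      have h1 := h (x * u⁻¹)
      rw [hy] at h1
      have h2 : x * u = x * (z * u * z) := by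
        calc x * u = x * (x * u⁻¹)⁻¹ * x := by group
          _ = x * z * (x * u⁻¹)⁻¹ * (x * z) := by rw [h1]
          _ = x * (z * u * z) := by group
      exact mul_left_cancel h2
    refine ⟨Subgroup.mem_center_iff.mpr fun g => ?_, hsq⟩
    calc g * z = z * g * z * z := by rw [← key g]
      _ = z * g := by rw [mul_assoc, hzz, mul_one]
  · rintro ⟨hc, hsq⟩
    intro a
    have hz : ∀ g : G, z * g = g * z := fun g => (Subgroup.mem_center_iff.mp hc g).symm
    have hzz : z * z = 1 := by rw [← sq]; exact hsq
    rw [hy]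
    calc x * a⁻¹ * x = x * a⁻¹ * x * (z * z) := by rw [hzz, mul_one]
      _ = x * a⁻¹ * (x * z) * z := by group
      _ = z * (x * a⁻¹ * (x * z)) := (hz _).symm
      _ = z * x * a⁻¹ * (x * z) := by group
      _ = x * z * a⁻¹ * (x * z) := by rw [hz x]
end

section
/- Let G be a finite group with core operation x * y = x y⁻¹ x. The core quandle Core(G) is faithful (the map x ↦ L_x, where L_x(a) = x a⁻¹ x, is injective) if and only if the order of the center Z(G) is odd. -/
theorem core_faithful_iff_center_odd (G : Type*) [Group G] [Finite G] :
    Function.Injective (fun x : G => fun a : G => x * a⁻¹ * x) ↔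
      Odd (Nat.card (Subgroup.center G)) := by
  constructor
  · intro hinj
    rw [Nat.odd_iff]
    by_contra h
    have h2 : 2 ∣ Nat.card (Subgroup.center G) := by omega
    haveI : Fact (Nat.Prime 2) := ⟨Nat.prime_two⟩
    obtain ⟨z, hz⟩ := exists_prime_orderOf_dvd_card' (G := Subgroup.center G) 2 h2
    have hz2 : (z : G) * (z : G) = 1 := by
      have h' : z ^ 2 = 1 := by rw [← hz]; exact pow_orderOf_eq_one z
      have := congrArg (Subtype.val) h'
      push_cast at this
      rwa [pow_two] at this
    have hzc : ∀ a : G, (z : G) * a = a * z := fun a =>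
      (Subgroup.mem_center_iff.mp z.2 a).symm
    have hze : (z : G) = 1 := by
      apply hinj (a₁ := (z : G)) (a₂ := 1)
      funext a
      simp only
      rw [mul_assoc, ← hzc a⁻¹, ← mul_assoc, hz2]; simp
    have : z = 1 := Subtype.ext hze
    rw [this, orderOf_one] at hz
    omega
  · intro hodd x y hxy
    simp only [funext_iff] at hxy
    have h1 : x * x = y * y := by simpa using hxy 1
    set z : G := y⁻¹ * x with hzdef
    have hyx : y * x⁻¹ = y⁻¹ * x := by
      apply mul_left_cancel (a := y)
      rw [← mul_assoc, ← h1, ← mul_assoc]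
      group
    have hzc : ∀ a : G, z * a = a * z := by
      intro a
      have key : x * a * x = y * a * y := by simpa using hxy a⁻¹
      have e1 : y⁻¹ * (x * a * x) * x⁻¹ = y⁻¹ * (y * a * y) * x⁻¹ := by rw [key]
      have e2 : y⁻¹ * x * a = a * (y * x⁻¹) := by
        have := e1
        group at this ⊢
        convert this using 1 <;> group
      rw [hyx] at e2
      exact e2
    have hmem : z ∈ Subgroup.center G := Subgroup.mem_center_iff.mpr (fun a => (hzc a).symm)
    have hz1 : z * z = 1 := by
      have : z * z = (z * y⁻¹) * x := by rw [hzdef]; group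
      calc z * z = (z * y⁻¹) * x := this
        _ = (y⁻¹ * z) * x := by rw [← hzc y⁻¹]
        _ = y⁻¹ * y⁻¹ * (x * x) := by rw [hzdef]; group
        _ = y⁻¹ * y⁻¹ * (y * y) := by rw [h1]
        _ = 1 := by group
    set w : Subgroup.center G := ⟨z, hmem⟩ with hwdef
    have hw2 : w * w = 1 := Subtype.ext hz1
    have hdvd : orderOf w ∣ 2 := orderOf_dvd_of_pow_eq_one (by rw [pow_two]; exact hw2)
    have hdvd' : orderOf w ∣ Nat.card (Subgroup.center G) := orderOf_dvd_natCard w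
    have hne2 : orderOf w ≠ 2 := by
      intro h
      rw [h] at hdvd'
      rw [Nat.odd_iff] at hodd
      omega
    have hord1 : orderOf w = 1 := by
      rcases (Nat.prime_two).eq_one_or_self_of_dvd _ hdvd with h | h <;> omega
    have hw1 : w = 1 := orderOf_eq_one_iff.mp hord1
    have hz1' : z = 1 := by
      have := congrArg Subtype.val hw1
      exact this
    have : y⁻¹ * x = 1 := hz1'
    calc x = y * (y⁻¹ * x) := by group
      _ = y := by rw [this, mul_one]
end

section
/- Let G be a group with core operation x * y = x y⁻¹ x. Then the right-distributive law (x * y) * z = (x * z) * (y * z) holds for all x, y, z ∈ G if and only if G is a 2-Engel group, i.e., [x, y x y⁻¹] = 1 for all x, y ∈ G (every element commutes with all its conjugates). -/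
theorem core_right_distributive_iff_two_engel (G : Type*) [Group G] :
    (∀ x y z : G,
      (x * y⁻¹ * x) * z⁻¹ * (x * y⁻¹ * x) =
        (x * z⁻¹ * x) * ((y * z⁻¹ * y))⁻¹ * (x * z⁻¹ * x)) ↔
    (∀ x y : G, x⁻¹ * (y * x * y⁻¹)⁻¹ * x * (y * x * y⁻¹) = 1) := by
  constructor
  · intro h x y
    have h1 := h 1 x⁻¹ y
    simp only [one_mul, mul_one, inv_inv, mul_inv_rev] at h1
    -- h1 : x * y⁻¹ * x = y⁻¹ * (x * (y * x)) * y⁻¹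
    have h2 : x * (y * x * y⁻¹) = (y * x * y⁻¹) * x := by
      calc x * (y * x * y⁻¹) = y * (y⁻¹ * (x * (y * x)) * y⁻¹) := by group
        _ = y * (x * y⁻¹ * x) := by rw [← h1]
        _ = (y * x * y⁻¹) * x := by group
    calc x⁻¹ * (y * x * y⁻¹)⁻¹ * x * (y * x * y⁻¹)
        = x⁻¹ * (y * x * y⁻¹)⁻¹ * (x * (y * x * y⁻¹)) := by group
      _ = x⁻¹ * (y * x * y⁻¹)⁻¹ * ((y * x * y⁻¹) * x) := by rw [h2]
      _ = 1 := by group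
  · intro h x y z
    set p : G := y⁻¹ * x with hp
    have hcomm : ∀ u v : G, (u * p * u⁻¹) * (v * p * v⁻¹) = (v * p * v⁻¹) * (u * p * u⁻¹) := by
      intro u v
      have h1 := h (u * p * u⁻¹) (v * u⁻¹)
      have h2 : v * u⁻¹ * (u * p * u⁻¹) * (v * u⁻¹)⁻¹ = v * p * v⁻¹ := by group
      rw [h2] at h1
      calc (u * p * u⁻¹) * (v * p * v⁻¹)
          = (v * p * v⁻¹) * (u * p * u⁻¹) *
              ((u * p * u⁻¹)⁻¹ * (v * p * v⁻¹)⁻¹ * (u * p * u⁻¹) * (v * p * v⁻¹)) := by group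
        _ = (v * p * v⁻¹) * (u * p * u⁻¹) * 1 := by rw [h1]
        _ = (v * p * v⁻¹) * (u * p * u⁻¹) := by group
    have key := hcomm z x
    calc (x * y⁻¹ * x) * z⁻¹ * (x * y⁻¹ * x)
        = x * z⁻¹ * ((z * p * z⁻¹) * (x * p * x⁻¹) * z) * z⁻¹ * x := by rw [hp]; group
      _ = x * z⁻¹ * ((x * p * x⁻¹) * (z * p * z⁻¹) * z) * z⁻¹ * x := by rw [key]
      _ = (x * z⁻¹ * x) * ((y * z⁻¹ * y))⁻¹ * (x * z⁻¹ * x) := by rw [hp]; group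
end

section
/- Let G be a group with core operation x * y = x y⁻¹ x, and define δ_x : G → G by δ_x(a) = x a x. If G is nilpotent of class at most 2 (i.e., every commutator [x,y] lies in the center Z(G)), then δ_x and δ_y commute for all x, y ∈ G: δ_x(δ_y(a)) with δ_y(δ_x(a)) composed via inverses give the identity, i.e., [δ_x, δ_y] = id as maps on G. Consequently the displacement group Dis(Core(G)) = ⟨δ_x : x ∈ G⟩ is abelian. -/
open scoped commutatorElement

/-- δ_x as a permutation of G: a ↦ x * a * x. -/
def coreDelta {G : Type*} [Group G] (x : G) : Equiv.Perm G :=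
  (Equiv.mulRight x).trans (Equiv.mulLeft x)

theorem core_two_nilpotent_implies_dis_abelian (G : Type*) [Group G]
    (h : ∀ x y : G, ⁅x, y⁆ ∈ Subgroup.center G) :
    (∀ x y : G, (fun a => x * a * x) ∘ (fun a => y * a * y) =
      (fun a => y * a * y) ∘ (fun a => x * a * x)) ∧
    (∀ f g : Equiv.Perm G,
      f ∈ Subgroup.closure {e : Equiv.Perm G | ∃ x : G, e = coreDelta x} →
      g ∈ Subgroup.closure {e : Equiv.Perm G | ∃ x : G, e = coreDelta x} →
      f * g = g * f) := by
  have key : ∀ x y : G, (fun a => x * a * x) ∘ (fun a => y * a * y) =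
      (fun a => y * a * y) ∘ (fun a => x * a * x) := by
    intro x y
    funext a
    simp only [Function.comp_apply]
    have hc : ∀ g : G, ⁅x, y⁆ * g = g * ⁅x, y⁆ := by
      intro g
      exact ((Subgroup.mem_center_iff.mp (h x y)) g).symm
    calc x * (y * a * y) * x = ⁅x, y⁆ * ((y * x) * a * (y * x)) := by
          rw [commutatorElement_def]; group
      _ = ((y * x) * a * (y * x)) * ⁅x, y⁆ := by rw [hc]
      _ = (y * x) * a * ((y * x) * ⁅x, y⁆) := by group
      _ = (y * x) * a * (⁅x, y⁆ * (y * x)) := by rw [hc]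
      _ = y * (x * a * x) * y := by rw [commutatorElement_def]; group
  refine ⟨key, ?_⟩
  have gen : ∀ x y : G, Commute (coreDelta x) (coreDelta y) := by
    intro x y
    apply Equiv.ext
    intro a
    have := congrFun (key x y) a
    simpa [coreDelta, mul_assoc] using this
  intro f g hf hg
  have : Commute f g := by
    refine Subgroup.closure_induction ?_ ?_ ?_ ?_ hf
    · intro p hp
      obtain ⟨x, rfl⟩ := hp
      refine Subgroup.closure_induction ?_ ?_ ?_ ?_ hg
      · rintro q ⟨y, rfl⟩; exact gen x y
      · exact Commute.one_right _
      · intro p q _ _ h1 h2; exact h1.mul_right h2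
      · intro p _ h1; exact h1.inv_right
    · exact Commute.one_left _
    · intro p q _ _ h1 h2; exact h1.mul_left h2
    · intro p _ h1; exact h1.inv_left
  exact this
end

section
/- Let G be a group with core operation x * y = x y⁻¹ x. If the displacement group Dis(Core(G)) = ⟨δ_x : x ∈ G⟩ (where δ_x(a) = x a x) is abelian, then the quotient G/Z(G) is abelian, i.e., G is nilpotent of class at most 2. -/
open scoped commutatorElement

theorem dis_abelian_implies_two_nilpotent (G : Type*) [Group G]
    (h : ∀ f g : Equiv.Perm G,
      f ∈ Subgroup.closure {e : Equiv.Perm G | ∃ x : G, e = coreDelta x} →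
      g ∈ Subgroup.closure {e : Equiv.Perm G | ∃ x : G, e = coreDelta x} →
      f * g = g * f) :
    ∀ x y : G, ⁅x, y⁆ ∈ Subgroup.center G := by
  intro x y
  have key := h (coreDelta x) (coreDelta y)
    (Subgroup.subset_closure ⟨x, rfl⟩) (Subgroup.subset_closure ⟨y, rfl⟩)
  have keyfun : ∀ a : G, (x * y) * a * (y * x) = (y * x) * a * (x * y) := by
    intro a
    have := DFunLike.congr_fun key a
    simp only [coreDelta, Equiv.Perm.mul_apply, Equiv.trans_apply,
      Equiv.coe_mulRight, Equiv.coe_mulLeft] at this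
    group at this ⊢
    simpa [mul_assoc] using this
  set u := x * y with hu
  set v := y * x with hv
  have h1 : u * v = v * u := by simpa using keyfun 1
  have h1' : v⁻¹ * u = u * v⁻¹ := by
    have := congrArg (fun z => v⁻¹ * z * v⁻¹) h1
    simpa [mul_assoc] using this
  rw [Subgroup.mem_center_iff]
  intro a
  have hc : ⁅x, y⁆ = u * v⁻¹ := by rw [hu, hv]; group
  rw [hc]
  calc a * (u * v⁻¹) = v⁻¹ * (v * a * u) * v⁻¹ := by group
    _ = v⁻¹ * (u * a * v) * v⁻¹ := by rw [keyfun a]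
    _ = (v⁻¹ * u) * a := by group
    _ = (u * v⁻¹) * a := by rw [h1']
end

section
/- Let G be a group with core operation x * y = x y⁻¹ x. For every x ∈ G, the orbit of x under the left multiplication group LMlt(Core(G)) = ⟨L_y : y ∈ G⟩ (where L_y(a) = y a⁻¹ y) equals the coset x·⟨s(G)⟩, where ⟨s(G)⟩ is the subgroup of G generated by all squares { g² : g ∈ G }. -/
/-- L_y as a permutation of G: a ↦ y * a⁻¹ * y. -/
def coreL {G : Type*} [Group G] (y : G) : Equiv.Perm G :=
  ((Equiv.inv G).trans (Equiv.mulRight y)).trans (Equiv.mulLeft y)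

lemma coreL_apply {G : Type*} [Group G] (y z : G) : coreL y z = y * (z⁻¹ * y) := rfl

lemma coreL_inv {G : Type*} [Group G] (y : G) : (coreL y)⁻¹ = coreL y := by
  ext z
  simp only [Equiv.Perm.inv_def]
  apply (coreL y).injective
  simp [coreL_apply, mul_assoc]

theorem core_orbits (G : Type*) [Group G] (x : G) :
    {z : G | ∃ f ∈ Subgroup.closure {e : Equiv.Perm G | ∃ y : G, e = coreL y},
        f x = z} =
      (fun h : G => x * h) '' (Subgroup.closure {g : G | ∃ a : G, g = a ^ 2} : Set G) := by
  set S := Subgroup.closure {g : G | ∃ a : G, g = a ^ 2} with hS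
  set gens := {e : Equiv.Perm G | ∃ y : G, e = coreL y} with hgens
  have key : ∀ y z : G, x⁻¹ * coreL y z = (x⁻¹ * z) * (z⁻¹ * y) ^ 2 := by
    intro y z; rw [coreL_apply, pow_two]; group
  have sq_mem : ∀ g : G, g ^ 2 ∈ S := fun g => Subgroup.subset_closure ⟨g, rfl⟩
  ext w
  constructor
  · rintro ⟨f, hf, rfl⟩
    have main : ∀ f ∈ Subgroup.closure gens,
        (∀ z : G, x⁻¹ * z ∈ S → x⁻¹ * f z ∈ S) ∧
        (∀ z : G, x⁻¹ * z ∈ S → x⁻¹ * f⁻¹ z ∈ S) := by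
      intro f hf
      induction hf using Subgroup.closure_induction with
      | mem e he =>
        obtain ⟨y, rfl⟩ := he
        rw [coreL_inv]
        refine ⟨?_, ?_⟩ <;>
        · intro z hz
          rw [key]
          exact mul_mem hz (sq_mem _)
      | one => simpa using fun z hz => ⟨hz, hz⟩
      | mul a b ha hb iha ihb =>
        refine ⟨fun z hz => ?_, fun z hz => ?_⟩
        · simpa using iha.1 _ (ihb.1 z hz)
        · simpa [mul_inv_rev] using ihb.2 _ (iha.2 z hz)
      | inv a ha iha => exact ⟨fun z hz => by simpa using iha.2 z hz,
          fun z hz => by simpa using iha.1 z hz⟩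
    have h1 : x⁻¹ * f x ∈ S := (main f hf).1 x (by simpa using one_mem S)
    exact ⟨x⁻¹ * f x, h1, by group⟩
  · rintro ⟨t, ht, rfl⟩
    -- orbit membership predicate
    have main : ∀ t ∈ S,
        (∀ z : G, (∃ f ∈ Subgroup.closure gens, f x = z) →
          ∃ f ∈ Subgroup.closure gens, f x = z * t) ∧
        (∀ z : G, (∃ f ∈ Subgroup.closure gens, f x = z) →
          ∃ f ∈ Subgroup.closure gens, f x = z * t⁻¹) := by
      intro t ht
      induction ht using Subgroup.closure_induction with
      | mem g hg =>
        obtain ⟨a, rfl⟩ := hg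
        constructor
        · rintro z ⟨f, hf, rfl⟩
          refine ⟨coreL (f x * a) * f,
            mul_mem (Subgroup.subset_closure ⟨f x * a, rfl⟩) hf, ?_⟩
          simp only [Equiv.Perm.mul_apply, coreL_apply, pow_two]
          group
        · rintro z ⟨f, hf, rfl⟩
          refine ⟨coreL (f x * a⁻¹) * f,
            mul_mem (Subgroup.subset_closure ⟨f x * a⁻¹, rfl⟩) hf, ?_⟩
          simp only [Equiv.Perm.mul_apply, coreL_apply, pow_two]
          group
      | one => exact ⟨fun z hz => by simpa using hz, fun z hz => by simpa using hz⟩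
      | mul a b ha hb iha ihb =>
        refine ⟨fun z hz => ?_, fun z hz => ?_⟩
        · simpa [mul_assoc] using ihb.1 _ (iha.1 z hz)
        · simpa [mul_inv_rev, mul_assoc] using iha.2 _ (ihb.2 z hz)
      | inv a ha iha => exact ⟨fun z hz => by simpa using iha.2 z hz,
          fun z hz => by simpa using iha.1 z hz⟩
    exact (main t ht).1 x ⟨1, one_mem _, rfl⟩
end

section
/- Let G be a group with core operation x * y = x y⁻¹ x, and let x, y ∈ G. Then for all natural numbers i: (L_x ∘ L_y)^i (x) = x (y⁻¹x)^{2i} and (L_x ∘ L_y)^i (y) = y (y⁻¹x)^{2i}, where L_a(b) = a b⁻¹ a. -/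
theorem core_LxLy_iterate (G : Type*) [Group G] (x y : G) (i : ℕ) :
    ((fun b : G => x * b⁻¹ * x) ∘ (fun b : G => y * b⁻¹ * y))^[i] x =
      x * (y⁻¹ * x) ^ (2 * i) ∧
    ((fun b : G => x * b⁻¹ * x) ∘ (fun b : G => y * b⁻¹ * y))^[i] y =
      y * (y⁻¹ * x) ^ (2 * i) := by
  have key : ∀ (c : G) (k : ℕ),
      x * (y * (c * (y⁻¹ * x) ^ k)⁻¹ * y)⁻¹ * x = x * (y⁻¹ * c) * (y⁻¹ * x) ^ (k + 1) := by
    intro c k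
    have : x * (y * (c * (y⁻¹ * x) ^ k)⁻¹ * y)⁻¹ * x
        = x * y⁻¹ * c * ((y⁻¹ * x) ^ k * (y⁻¹ * x)) := by
      simp [mul_inv_rev, mul_assoc]
    rw [this, ← pow_succ]
    simp [mul_assoc]
  induction i with
  | zero => simp
  | succ n ih =>
    obtain ⟨h1, h2⟩ := ih
    rw [Function.iterate_succ_apply', Function.iterate_succ_apply', h1, h2]
    simp only [Function.comp_apply, key]
    constructor
    · rw [show 2 * (n + 1) = (2 * n + 1) + 1 by ring, mul_assoc, ← pow_succ']
    · rw [show 2 * (n + 1) = (2 * n + 1) + 1 by ring, inv_mul_cancel, mul_one,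
        pow_succ' (y⁻¹ * x) (2*n+1), ← mul_assoc, mul_inv_cancel_left]
end
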